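/- arXiv:1906.01474 — 6 statements merged into one kernel-verified Lean document; each statement's English description precedes it below -/
import Mathlib

section
/- Let a_1,...,a_n be vectors in R^d and let P be a probability distribution over subsets of {1,...,n} such that p_i := P(i ∈ S) > 0 for all i. Then E_{S∼P}[‖Σ_{i∈S} a_i/p_i‖²] ≤ (max_{1≤i≤n} E[|S| | i∈S]/p_i) · Σ_{i=1}^n ‖a_i‖². -/
open Finset

noncomputable section

theorem stmt0 {d n : ℕ} (hn : 0 < n)
    (P : Finset (Fin n) → ℝ) (hP : ∀ S, 0 ≤ P S)
    (hPsum : ∑ S : Finset (Fin n), P S = 1)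
    (p : Fin n → ℝ)
    (hp : ∀ i, p i = ∑ S ∈ Finset.univ.filter (fun S : Finset (Fin n) => i ∈ S), P S)
    (hproper : ∀ i, 0 < p i)
    (a : Fin n → EuclideanSpace ℝ (Fin d)) :
    ∑ S : Finset (Fin n), P S * ‖∑ i ∈ S, (p i)⁻¹ • a i‖ ^ 2 ≤
      (Finset.univ.sup' ⟨⟨0, hn⟩, Finset.mem_univ _⟩ fun i =>
        ((∑ S ∈ Finset.univ.filter (fun S : Finset (Fin n) => i ∈ S),
            P S * (S.card : ℝ)) / p i) / p i) *
      ∑ i, ‖a i‖ ^ 2 := by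
  set M : ℝ := Finset.univ.sup' ⟨⟨0, hn⟩, Finset.mem_univ _⟩ fun i =>
        ((∑ S ∈ Finset.univ.filter (fun S : Finset (Fin n) => i ∈ S),
            P S * (S.card : ℝ)) / p i) / p i with hM
  -- step 1: pointwise bound
  have key : ∀ S : Finset (Fin n), ‖∑ i ∈ S, (p i)⁻¹ • a i‖ ^ 2 ≤
      (S.card : ℝ) * ∑ i ∈ S, (p i)⁻¹ * (p i)⁻¹ * ‖a i‖ ^ 2 := by
    intro S
    have h1 : ‖∑ i ∈ S, (p i)⁻¹ • a i‖ ≤ ∑ i ∈ S, (p i)⁻¹ * ‖a i‖ := by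
      refine (norm_sum_le _ _).trans (le_of_eq ?_)
      refine Finset.sum_congr rfl fun i _ => ?_
      rw [norm_smul, Real.norm_eq_abs, abs_of_pos (inv_pos.2 (hproper i))]
    calc ‖∑ i ∈ S, (p i)⁻¹ • a i‖ ^ 2 ≤ (∑ i ∈ S, (p i)⁻¹ * ‖a i‖) ^ 2 := by
          apply pow_le_pow_left₀ (norm_nonneg _) h1
      _ ≤ (S.card : ℝ) * ∑ i ∈ S, ((p i)⁻¹ * ‖a i‖) ^ 2 :=
          sq_sum_le_card_mul_sum_sq
      _ = (S.card : ℝ) * ∑ i ∈ S, (p i)⁻¹ * (p i)⁻¹ * ‖a i‖ ^ 2 := by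
          congr 1; exact Finset.sum_congr rfl fun i _ => by ring
  -- step 2
  have step2 : ∑ S : Finset (Fin n), P S * ‖∑ i ∈ S, (p i)⁻¹ • a i‖ ^ 2 ≤
      ∑ S : Finset (Fin n), P S * ((S.card : ℝ) * ∑ i ∈ S, (p i)⁻¹ * (p i)⁻¹ * ‖a i‖ ^ 2) :=
    Finset.sum_le_sum fun S _ => mul_le_mul_of_nonneg_left (key S) (hP S)
  -- step 3: swap sums
  have swap : ∑ S : Finset (Fin n), P S * ((S.card : ℝ) * ∑ i ∈ S, (p i)⁻¹ * (p i)⁻¹ * ‖a i‖ ^ 2)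
      = ∑ i : Fin n, (∑ S ∈ Finset.univ.filter (fun S : Finset (Fin n) => i ∈ S),
          P S * (S.card : ℝ)) * ((p i)⁻¹ * (p i)⁻¹ * ‖a i‖ ^ 2) := by
    simp_rw [Finset.sum_mul, Finset.mul_sum, Finset.sum_filter]
    rw [Finset.sum_comm]
    refine Finset.sum_congr rfl fun S _ => ?_
    rw [← Finset.sum_filter]
    simp only [Finset.filter_mem_eq_inter, Finset.univ_inter]
    exact Finset.sum_congr rfl fun i _ => by ring
  -- step 4: bound each term by M
  have step4 : ∑ i : Fin n, (∑ S ∈ Finset.univ.filter (fun S : Finset (Fin n) => i ∈ S),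
          P S * (S.card : ℝ)) * ((p i)⁻¹ * (p i)⁻¹ * ‖a i‖ ^ 2) ≤ M * ∑ i, ‖a i‖ ^ 2 := by
    rw [Finset.mul_sum]
    refine Finset.sum_le_sum fun i _ => ?_
    have hMi : ((∑ S ∈ Finset.univ.filter (fun S : Finset (Fin n) => i ∈ S),
            P S * (S.card : ℝ)) / p i) / p i ≤ M := by
      rw [hM]
      exact Finset.le_sup' (fun i => ((∑ S ∈ Finset.univ.filter (fun S : Finset (Fin n) => i ∈ S),
            P S * (S.card : ℝ)) / p i) / p i) (Finset.mem_univ i)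
    have : (∑ S ∈ Finset.univ.filter (fun S : Finset (Fin n) => i ∈ S),
          P S * (S.card : ℝ)) * ((p i)⁻¹ * (p i)⁻¹ * ‖a i‖ ^ 2)
        = (((∑ S ∈ Finset.univ.filter (fun S : Finset (Fin n) => i ∈ S),
            P S * (S.card : ℝ)) / p i) / p i) * ‖a i‖ ^ 2 := by
      field_simp
    rw [this]
    exact mul_le_mul_of_nonneg_right hMi (by positivity)
  exact (step2.trans (le_of_eq swap)).trans step4
end
end

section
/- Let P be the τ-nice sampling on {1,...,n} (uniform distribution over all subsets of cardinality τ, with 1 ≤ τ ≤ n). Then for all vectors a_1,...,a_n in R^d, E_{S∼P}[‖Σ_{i∈S} (n/τ) a_i‖²] = (n(n−τ))/(τ(n−1)) · Σ_{i=1}^n ‖a_i‖² + (n(τ−1))/(τ(n−1)) · ‖Σ_{i=1}^n a_i‖². -/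
open Finset

noncomputable section

/-!
Expanding the square, `E ‖∑_{i ∈ S} a i‖² = ∑_{i,j} P({i, j} ⊆ S) ⟪a i, a j⟫`. For the τ-nice
sampling `P(t ⊆ S) = C(τ, #t) / C(n, #t)` (double counting `#{S | #S = τ, t ⊆ S} · C(n, #t) =
C(n, τ) · C(τ, #t)`), which is `τ / n` on the diagonal and `τ (τ - 1) / (n (n - 1))` off it.
Splitting the double sum into its diagonal and the full square `‖∑ i, a i‖²` gives the formula.
-/

theorem Finset.card_filter_powersetCard_subset_mul_choose {α : Type*} [DecidableEq α]
    (s t : Finset α) (k : ℕ) (hts : t ⊆ s) :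
    #{S ∈ s.powersetCard k | t ⊆ S} * (#s).choose #t = (#s).choose k * k.choose #t := by
  by_cases htk : #t ≤ k
  · rw [card_filter_powersetCard_subset t s k hts htk, Nat.choose_mul htk, mul_comm]
  · have hempty : {S ∈ s.powersetCard k | t ⊆ S} = ∅ :=
      filter_eq_empty_iff.2 fun S hS htS => htk <| (mem_powersetCard.1 hS).2 ▸ card_le_card htS
    rw [hempty, Nat.choose_eq_zero_of_lt (not_le.1 htk)]
    simp

section InnerProductSpace

variable {ι E : Type*} [NormedAddCommGroup E] [InnerProductSpace ℝ E]

theorem norm_sum_sq_eq_sum_sum_inner (s : Finset ι) (a : ι → E) :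
    ‖∑ i ∈ s, a i‖ ^ 2 = ∑ i ∈ s, ∑ j ∈ s, inner ℝ (a i) (a j) := by
  rw [← real_inner_self_eq_norm_sq, sum_inner]
  simp_rw [inner_sum]

variable [Fintype ι] [DecidableEq ι]

theorem sum_sum_mem_eq_sum_sum_ite_pair_subset {M : Type*} [AddCommMonoid M] (S : Finset ι)
    (f : ι → ι → M) :
    ∑ i ∈ S, ∑ j ∈ S, f i j = ∑ i, ∑ j, if {i, j} ⊆ S then f i j else 0 := by
  rw [← Fintype.sum_ite_mem]
  refine sum_congr rfl fun i _ => ?_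
  by_cases hi : i ∈ S
  · rw [← Fintype.sum_ite_mem]
    simp [insert_subset_iff, hi]
  · simp [insert_subset_iff, hi]

theorem sum_mul_norm_sum_sq_eq (w : Finset ι → ℝ) (a : ι → E) :
    ∑ S, w S * ‖∑ i ∈ S, a i‖ ^ 2 =
      ∑ i, ∑ j, (∑ S with {i, j} ⊆ S, w S) * inner ℝ (a i) (a j) := by
  have hS (S : Finset ι) : w S * ‖∑ i ∈ S, a i‖ ^ 2 =
      ∑ i, ∑ j, if {i, j} ⊆ S then w S * inner ℝ (a i) (a j) else 0 := by
    rw [norm_sum_sq_eq_sum_sum_inner, sum_sum_mem_eq_sum_sum_ite_pair_subset, mul_sum]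
    simp_rw [mul_sum, mul_ite, mul_zero]
  simp_rw [hS, sum_filter, sum_mul, ite_mul, zero_mul]
  rw [sum_comm]
  exact sum_congr rfl fun i _ => sum_comm

theorem sum_sum_ite_mul_inner (p q : ℝ) (a : ι → E) :
    ∑ i, ∑ j, (if i = j then p else q) * inner ℝ (a i) (a j) =
      (p - q) * ∑ i, ‖a i‖ ^ 2 + q * ‖∑ i, a i‖ ^ 2 := by
  have hsplit (i j : ι) : (if i = j then p else q) = (if i = j then p - q else 0) + q := by
    split_ifs <;> ring
  simp_rw [hsplit, add_mul, sum_add_distrib, ite_mul, zero_mul, sum_ite_eq, mem_univ, if_true,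
    ← mul_sum, norm_sum_sq_eq_sum_sum_inner, real_inner_self_eq_norm_sq]

end InnerProductSpace

def niceSampling (n τ : ℕ) (S : Finset (Fin n)) : ℝ :=
  if #S = τ then (n.choose τ : ℝ)⁻¹ else 0

theorem sum_filter_subset_niceSampling {n τ : ℕ} (hτ : τ ≤ n) (t : Finset (Fin n)) :
    ∑ S with t ⊆ S, niceSampling n τ S = τ.choose #t / n.choose #t := by
  have hcount := card_filter_powersetCard_subset_mul_choose univ t τ (subset_univ t)
  rw [card_univ, Fintype.card_fin] at hcount
  have hfilter : ({S | t ⊆ S ∧ #S = τ} : Finset (Finset (Fin n))) =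
      {S ∈ (univ : Finset (Fin n)).powersetCard τ | t ⊆ S} := by
    ext S; simp [and_comm]
  have hτ0 : (n.choose τ : ℝ) ≠ 0 := mod_cast (Nat.choose_pos hτ).ne'
  have ht0 : (n.choose #t : ℝ) ≠ 0 :=
    mod_cast (Nat.choose_pos ((card_le_univ t).trans_eq (Fintype.card_fin n))).ne'
  unfold niceSampling
  rw [← sum_filter, filter_filter, hfilter, sum_const, nsmul_eq_mul, eq_div_iff ht0,
    mul_right_comm, ← Nat.cast_mul, hcount, Nat.cast_mul]
  field_simp

theorem stmt1 {d n τ : ℕ} (hn : 2 ≤ n) (hτ1 : 1 ≤ τ) (hτn : τ ≤ n)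
    (a : Fin n → EuclideanSpace ℝ (Fin d)) :
    ∑ S : Finset (Fin n),
        (if S.card = τ then ((n.choose τ : ℝ))⁻¹ else 0) *
          ‖∑ i ∈ S, ((n : ℝ) / (τ : ℝ)) • a i‖ ^ 2 =
      ((n : ℝ) * ((n : ℝ) - (τ : ℝ))) / ((τ : ℝ) * ((n : ℝ) - 1)) * ∑ i, ‖a i‖ ^ 2 +
      ((n : ℝ) * ((τ : ℝ) - 1)) / ((τ : ℝ) * ((n : ℝ) - 1)) * ‖∑ i, a i‖ ^ 2 := by
  have hpair (i j : Fin n) : (τ.choose #{i, j} : ℝ) / n.choose #{i, j} =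
      if i = j then (τ : ℝ) / n else τ * (τ - 1) / (n * (n - 1)) := by
    split_ifs with hij
    · simp [hij]
    · rw [card_pair hij, Nat.cast_choose_two, Nat.cast_choose_two,
        div_div_div_cancel_right₀ two_ne_zero]
  have hτ0 : (τ : ℝ) ≠ 0 := Nat.cast_ne_zero.2 (Nat.one_le_iff_ne_zero.1 hτ1)
  have hn1 : (n : ℝ) - 1 ≠ 0 := by
    have : (2 : ℝ) ≤ n := mod_cast hn
    linarith
  change ∑ S, niceSampling n τ S * _ = _
  simp_rw [sum_mul_norm_sum_sq_eq, sum_filter_subset_niceSampling hτn, hpair,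
    sum_sum_ite_mul_inner, ← smul_sum, norm_smul, mul_pow, ← mul_sum, Real.norm_eq_abs, sq_abs]
  field_simp
  ring
end
end

section
/- For the τ-nice sampling, Assumption (A,B) holds with A = n(n−τ)/(τ(n−1)) and B = n(τ−1)/(τ(n−1)); i.e., for all a_1,...,a_n ∈ R^d, E_{S∼P}[‖Σ_{i∈S} a_i/p_i‖²] ≤ A Σ_{i=1}^n ‖a_i‖² + B ‖Σ_{i=1}^n a_i‖². -/
/-!
Expanding the square, `∑_{|S| = τ} ‖∑_{i ∈ S} a i‖²` is `∑_{i,j} N(i,j) ⟪a i, a j⟫`, where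
`N(i,j)` counts the `τ`-subsets containing both `i` and `j`. Double counting pairs `t ⊆ S` gives
`N(i,i) = C(n,τ) τ/n` and `N(i,j) = C(n,τ) τ(τ-1)/(n(n-1))` for `i ≠ j`, so the second moment is
exactly `A ∑ ‖a i‖² + B ‖∑ a i‖²`: the inequality holds with equality.
-/

open Finset

namespace Finset

variable {ι : Type*} [DecidableEq ι]

lemma card_filter_powersetCard_subset_mul_choose_s2 (s t : Finset ι) (k : ℕ) (hts : t ⊆ s) :
    #{S ∈ s.powersetCard k | t ⊆ S} * (#s).choose #t = (#s).choose k * k.choose #t := by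
  rcases le_or_gt #t k with htk | hkt
  · rw [card_filter_powersetCard_subset t s k hts htk, Nat.choose_mul htk, mul_comm]
  · rw [Nat.choose_eq_zero_of_lt hkt, mul_zero, card_eq_zero.2, zero_mul]
    refine filter_eq_empty_iff.2 fun S hS htS => ?_
    have := card_le_card htS
    rw [(mem_powersetCard.1 hS).2] at this
    omega

end Finset

section InnerProductSpace

variable {ι E : Type*} [Fintype ι] [DecidableEq ι] [NormedAddCommGroup E] [InnerProductSpace ℝ E]

open RealInnerProductSpace

lemma sum_norm_sq_sum_eq_sum_card_mul_inner (𝒮 : Finset (Finset ι)) (a : ι → E) :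
    ∑ S ∈ 𝒮, ‖∑ i ∈ S, a i‖ ^ 2 =
      ∑ i, ∑ j, (#{S ∈ 𝒮 | i ∈ S ∧ j ∈ S} : ℝ) * ⟪a i, a j⟫ := by
  have hS : ∀ S : Finset ι, ‖∑ i ∈ S, a i‖ ^ 2 =
      ∑ i, ∑ j, if i ∈ S ∧ j ∈ S then ⟪a i, a j⟫ else 0 := by
    intro S
    rw [← real_inner_self_eq_norm_sq, sum_inner]
    simp [inner_sum, ite_and]
  simp_rw [hS, sum_comm (s := 𝒮), ← sum_filter, sum_const, nsmul_eq_mul]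

lemma sum_norm_sq_sum_of_card_filter_mem (𝒮 : Finset (Finset ι)) (a : ι → E) {c₁ c₂ : ℝ}
    (h₁ : ∀ i, (#{S ∈ 𝒮 | i ∈ S} : ℝ) = c₁)
    (h₂ : ∀ i j, i ≠ j → (#{S ∈ 𝒮 | i ∈ S ∧ j ∈ S} : ℝ) = c₂) :
    ∑ S ∈ 𝒮, ‖∑ i ∈ S, a i‖ ^ 2 = (c₁ - c₂) * ∑ i, ‖a i‖ ^ 2 + c₂ * ‖∑ i, a i‖ ^ 2 := by
  have hc : ∀ i j, (#{S ∈ 𝒮 | i ∈ S ∧ j ∈ S} : ℝ) = c₂ + if i = j then c₁ - c₂ else 0 := by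
    intro i j
    rcases eq_or_ne i j with rfl | hij
    · simp [h₁]
    · simp [h₂ i j hij, hij]
  have hnorm : ‖∑ i, a i‖ ^ 2 = ∑ i, ∑ j, ⟪a i, a j⟫ := by
    rw [← real_inner_self_eq_norm_sq, sum_inner]
    simp_rw [inner_sum]
  simp_rw [sum_norm_sq_sum_eq_sum_card_mul_inner, hc, add_mul, sum_add_distrib, ite_mul, zero_mul,
    sum_ite_eq, mem_univ, if_true, hnorm, ← mul_sum, real_inner_self_eq_norm_sq]
  ring

lemma sum_powersetCard_norm_sq_sum (a : ι → E) (k : ℕ) (hι : 2 ≤ Fintype.card ι) :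
    ∑ S ∈ powersetCard k univ, ‖∑ i ∈ S, a i‖ ^ 2 =
      (Fintype.card ι).choose k *
        ((k * (Fintype.card ι - k)) / (Fintype.card ι * (Fintype.card ι - 1)) * ∑ i, ‖a i‖ ^ 2 +
          (k * (k - 1)) / (Fintype.card ι * (Fintype.card ι - 1)) * ‖∑ i, a i‖ ^ 2) := by
  set n := Fintype.card ι
  have hn : (2 : ℝ) ≤ n := by exact_mod_cast hι
  have hcount (t : Finset ι) :
      (#{S ∈ powersetCard k univ | t ⊆ S} : ℝ) * n.choose #t = n.choose k * k.choose #t := by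
    exact_mod_cast card_filter_powersetCard_subset_mul_choose_s2 univ t k (subset_univ t)
  have h₁ (i : ι) : (#{S ∈ powersetCard k univ | i ∈ S} : ℝ) = n.choose k * k / n := by
    have := hcount {i}
    simp only [singleton_subset_iff, card_singleton, Nat.choose_one_right] at this
    rw [eq_div_iff (by positivity), this]
  have h₂ (i j : ι) (hij : i ≠ j) : (#{S ∈ powersetCard k univ | i ∈ S ∧ j ∈ S} : ℝ) =
      n.choose k * (k * (k - 1)) / (n * (n - 1)) := by
    have := hcount {i, j}
    simp only [insert_subset_iff, singleton_subset_iff, card_pair hij, Nat.cast_choose_two] at this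
    rw [eq_div_iff (by nlinarith)]
    linarith
  rw [sum_norm_sq_sum_of_card_filter_mem _ a h₁ h₂]
  have : (n : ℝ) - 1 ≠ 0 := by linarith
  field_simp
  ring

end InnerProductSpace

theorem stmt2 {d n τ : ℕ} (hn : 2 ≤ n) (hτ1 : 1 ≤ τ) (hτn : τ ≤ n)
    (a : Fin n → EuclideanSpace ℝ (Fin d)) :
    ∑ S : Finset (Fin n),
        (if S.card = τ then ((n.choose τ : ℝ))⁻¹ else 0) *
          ‖∑ i ∈ S, ((τ : ℝ) / (n : ℝ))⁻¹ • a i‖ ^ 2 ≤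
      ((n : ℝ) * ((n : ℝ) - (τ : ℝ))) / ((τ : ℝ) * ((n : ℝ) - 1)) * ∑ i, ‖a i‖ ^ 2 +
      ((n : ℝ) * ((τ : ℝ) - 1)) / ((τ : ℝ) * ((n : ℝ) - 1)) * ‖∑ i, a i‖ ^ 2 := by
  have hscale (S : Finset (Fin n)) :
      ‖∑ i ∈ S, ((τ : ℝ) / n)⁻¹ • a i‖ ^ 2 = ((n : ℝ) / τ) ^ 2 * ‖∑ i ∈ S, a i‖ ^ 2 := by
    rw [← smul_sum, norm_smul, mul_pow, inv_div, Real.norm_of_nonneg (by positivity)]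
  simp_rw [hscale, ite_mul, zero_mul]
  rw [← sum_filter, univ_filter_card_eq, ← mul_sum, ← mul_sum,
    sum_powersetCard_norm_sq_sum a τ (by simpa using hn), Fintype.card_fin]
  have hτ : (τ : ℝ) ≠ 0 := by exact_mod_cast Nat.one_le_iff_ne_zero.mp hτ1
  have hchoose : (n.choose τ : ℝ) ≠ 0 := by exact_mod_cast (Nat.choose_pos hτn).ne'
  have hn1 : (n : ℝ) - 1 ≠ 0 := by
    have : (2 : ℝ) ≤ n := by exact_mod_cast hn
    linarith
  apply le_of_eq
  field_simp
end

section
/- Let f_1,...,f_n : R^d → R be convex, differentiable and L-smooth, let f = (1/n)Σ f_i, and let x* be a minimizer of f. Then for all x, Σ_{i=1}^n ‖f_i'(x) − f_i'(x*)‖² ≤ 2 n L (f(x) − f(x*)). -/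
/-!
A convex `L`-smooth `f` satisfies the co-coercivity bound
`‖∇f(z) - ∇f(y)‖² ≤ 2L (f z - f y - ⟪∇f(y), z - y⟫)`: compare the convexity lower bound of `f`
at `y` with the smoothness upper bound (descent lemma) at `z`, both evaluated at the gradient step
`z - L⁻¹ (∇f(z) - ∇f(y))`. Summing over `i` with `y = x*`, the linear terms cancel because
`∑ ∇f_i(x*) = 0` at a minimizer of the sum.
-/

open RealInnerProductSpace

section Gradient

variable {E : Type*} [NormedAddCommGroup E] [InnerProductSpace ℝ E] [CompleteSpace E]
  {f : E → ℝ} {g : E → E} {L : ℝ}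

theorem HasGradientAt.hasDerivAt_add_smul {f' y v : E} {t : ℝ}
    (hf : HasGradientAt f f' (y + t • v)) :
    HasDerivAt (fun s : ℝ => f (y + s • v)) ⟪f', v⟫ t := by
  have hline : HasDerivAt (fun s : ℝ => y + s • v) v t := by
    simpa using ((hasDerivAt_id t).smul_const v).const_add y
  exact hf.hasFDerivAt.comp_hasDerivAt t hline

theorem ConvexOn.add_inner_le_of_hasGradientAt {f' x : E} (hf : ConvexOn ℝ Set.univ f)
    (hg : HasGradientAt f f' x) (z : E) :
    f x + ⟪f', z - x⟫ ≤ f z := by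
  have hline : ConvexOn ℝ Set.univ (fun t : ℝ => f (x + t • (z - x))) := by
    have hcomp : f ∘ AffineMap.lineMap x z = fun t : ℝ => f (x + t • (z - x)) := by
      ext t
      simp [AffineMap.lineMap_apply_module', add_comm]
    simpa only [hcomp] using
      (hf.comp_affineMap (AffineMap.lineMap x z)).subset (Set.subset_univ _) convex_univ
  have hd : HasDerivAt (fun t : ℝ => f (x + t • (z - x))) ⟪f', z - x⟫ 0 :=
    HasGradientAt.hasDerivAt_add_smul (by simpa using hg)
  have hslope := hline.le_slope_of_hasDerivAt (Set.mem_univ 0) (Set.mem_univ 1) zero_lt_one hd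
  simp only [slope_def_field, zero_smul, add_zero, one_smul, add_sub_cancel, sub_zero,
    div_one] at hslope
  linarith

theorem le_add_inner_add_sq_of_hasGradientAt (hg : ∀ x, HasGradientAt f (g x) x)
    (hL : ∀ a b, ‖g a - g b‖ ≤ L * ‖a - b‖) (y z : E) :
    f z ≤ f y + ⟪g y, z - y⟫ + L / 2 * ‖z - y‖ ^ 2 := by
  set v := z - y
  have hderiv (t : ℝ) : HasDerivAt (fun s : ℝ => f (y + s • v)) ⟪g (y + t • v), v⟫ t :=
    (hg _).hasDerivAt_add_smul
  have hmodel (t : ℝ) : HasDerivAt (fun s : ℝ => f y + s * ⟪g y, v⟫ + L / 2 * s ^ 2 * ‖v‖ ^ 2)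
      (⟪g y, v⟫ + L * t * ‖v‖ ^ 2) t := by
    refine ((((hasDerivAt_id' (x := t)).mul_const ⟪g y, v⟫).const_add (f y)).add
      (((hasDerivAt_pow 2 t).const_mul (L / 2)).mul_const (‖v‖ ^ 2))).congr_deriv ?_
    ring
  have hslope {t : ℝ} (ht : 0 ≤ t) : ⟪g (y + t • v), v⟫ ≤ ⟪g y, v⟫ + L * t * ‖v‖ ^ 2 :=
    calc ⟪g (y + t • v), v⟫ = ⟪g y, v⟫ + ⟪g (y + t • v) - g y, v⟫ := by
          rw [inner_sub_left]; ring
      _ ≤ ⟪g y, v⟫ + L * ‖(y + t • v) - y‖ * ‖v‖ := by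
          gcongr
          exact (real_inner_le_norm _ _).trans (by gcongr; exact hL _ _)
      _ = ⟪g y, v⟫ + L * t * ‖v‖ ^ 2 := by
          rw [add_sub_cancel_left, norm_smul, Real.norm_of_nonneg ht]; ring
  have h := image_le_of_deriv_right_le_deriv_boundary
    (fun t _ => (hderiv t).continuousAt.continuousWithinAt)
    (fun t _ => (hderiv t).hasDerivWithinAt) (by simp)
    (fun t _ => (hmodel t).continuousAt.continuousWithinAt)
    (fun t _ => (hmodel t).hasDerivWithinAt) (fun t ht => hslope ht.1)
    (Set.right_mem_Icc.mpr zero_le_one)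
  simpa [v] using h

theorem ConvexOn.sq_norm_sub_gradient_le_of_pos (hf : ConvexOn ℝ Set.univ f)
    (hg : ∀ x, HasGradientAt f (g x) x) (hL : ∀ a b, ‖g a - g b‖ ≤ L * ‖a - b‖) (hLpos : 0 < L)
    (y z : E) :
    ‖g z - g y‖ ^ 2 ≤ 2 * L * (f z - f y - ⟪g y, z - y⟫) := by
  set u := g z - g y
  set w := z - L⁻¹ • u
  have hlow := hf.add_inner_le_of_hasGradientAt (hg y) w
  have hup := le_add_inner_add_sq_of_hasGradientAt hg hL z w
  have hwz : w - z = -(L⁻¹ • u) := by simp [w]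
  have hwy : w - y = (z - y) + (w - z) := by abel
  have hinner : ⟪g y, w - y⟫ - ⟪g z, w - z⟫ = ⟪g y, z - y⟫ + L⁻¹ * ‖u‖ ^ 2 := by
    rw [hwy, inner_add_right, add_sub_assoc, ← inner_sub_left, hwz, inner_neg_right,
      real_inner_smul_right, ← neg_sub (g z) (g y), inner_neg_left, real_inner_self_eq_norm_sq]
    ring
  have hnorm : ‖w - z‖ ^ 2 = L⁻¹ ^ 2 * ‖u‖ ^ 2 := by
    rw [hwz, norm_neg, norm_smul, Real.norm_of_nonneg (inv_nonneg.mpr hLpos.le)]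
    ring
  have hbound : L⁻¹ * ‖u‖ ^ 2 - L / 2 * (L⁻¹ ^ 2 * ‖u‖ ^ 2) ≤ f z - f y - ⟪g y, z - y⟫ := by
    rw [← hnorm]; linarith
  calc ‖u‖ ^ 2 = 2 * L * (L⁻¹ * ‖u‖ ^ 2 - L / 2 * (L⁻¹ ^ 2 * ‖u‖ ^ 2)) := by
        field_simp; ring
    _ ≤ 2 * L * (f z - f y - ⟪g y, z - y⟫) := by gcongr

theorem ConvexOn.sq_norm_sub_gradient_le (hf : ConvexOn ℝ Set.univ f)
    (hg : ∀ x, HasGradientAt f (g x) x) (hL : ∀ a b, ‖g a - g b‖ ≤ L * ‖a - b‖) (y z : E) :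
    ‖g z - g y‖ ^ 2 ≤ 2 * L * (f z - f y - ⟪g y, z - y⟫) := by
  rcases lt_or_ge 0 L with hLpos | hLnonpos
  · exact hf.sq_norm_sub_gradient_le_of_pos hg hL hLpos y z
  have hprod : L * ‖z - y‖ = 0 := le_antisymm
    (mul_nonpos_of_nonpos_of_nonneg hLnonpos (norm_nonneg _)) ((norm_nonneg _).trans (hL z y))
  have hgrad : ‖g z - g y‖ = 0 := le_antisymm (hprod ▸ hL z y) (norm_nonneg _)
  rcases mul_eq_zero.mp hprod with rfl | hzy
  · simp [hgrad]
  · simp [norm_sub_eq_zero_iff.mp hzy]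

theorem IsLocalMin.sum_eq_zero_of_hasGradientAt {ι : Type*} {s : Finset ι} {F : ι → E → ℝ}
    {G : ι → E} {x : E} (hmin : IsLocalMin (fun y => ∑ i ∈ s, F i y) x)
    (hG : ∀ i ∈ s, HasGradientAt (F i) (G i) x) :
    ∑ i ∈ s, G i = 0 := by
  have hderiv := HasFDerivAt.fun_sum fun i hi => (hG i hi).hasFDerivAt
  rw [← map_sum] at hderiv
  exact (InnerProductSpace.toDual ℝ E).map_eq_zero_iff.mp
    (by exact_mod_cast hmin.hasFDerivAt_eq_zero hderiv)

end Gradient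

theorem stmt6_general {d n : ℕ}
    (f : Fin n → EuclideanSpace ℝ (Fin d) → ℝ)
    (g : Fin n → EuclideanSpace ℝ (Fin d) → EuclideanSpace ℝ (Fin d)) (L : ℝ)
    (hconv : ∀ i, ConvexOn ℝ Set.univ (f i))
    (hg : ∀ i y, HasGradientAt (f i) (g i y) y)
    (hL : ∀ i x y, ‖g i x - g i y‖ ≤ L * ‖x - y‖)
    (xs : EuclideanSpace ℝ (Fin d))
    (hmin : ∀ y, (n : ℝ)⁻¹ * ∑ i, f i xs ≤ (n : ℝ)⁻¹ * ∑ i, f i y)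
    (x : EuclideanSpace ℝ (Fin d)) :
    ∑ i, ‖g i x - g i xs‖ ^ 2 ≤
      2 * n * L * ((n : ℝ)⁻¹ * ∑ i, f i x - (n : ℝ)⁻¹ * ∑ i, f i xs) := by
  obtain rfl | hn := n.eq_zero_or_pos
  · simp
  have hn' : (0 : ℝ) < n := Nat.cast_pos.mpr hn
  have hsum_min : IsLocalMin (fun y => ∑ i, f i y) xs :=
    IsMinOn.isLocalMin (fun y _ => le_of_mul_le_mul_left (hmin y) (inv_pos.mpr hn'))
      Filter.univ_mem
  have hgrad_sum : ∑ i, g i xs = 0 :=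
    hsum_min.sum_eq_zero_of_hasGradientAt fun i _ => hg i xs
  calc ∑ i, ‖g i x - g i xs‖ ^ 2
      ≤ ∑ i, 2 * L * (f i x - f i xs - ⟪g i xs, x - xs⟫) :=
        Finset.sum_le_sum fun i _ => (hconv i).sq_norm_sub_gradient_le (hg i) (hL i) xs x
    _ = 2 * L * (∑ i, f i x - ∑ i, f i xs - ⟪∑ i, g i xs, x - xs⟫) := by
        rw [← Finset.mul_sum, sum_inner, Finset.sum_sub_distrib, Finset.sum_sub_distrib]
    _ = 2 * n * L * ((n : ℝ)⁻¹ * ∑ i, f i x - (n : ℝ)⁻¹ * ∑ i, f i xs) := by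
        rw [hgrad_sum, inner_zero_left, sub_zero]
        field_simp

theorem stmt6 {d n : ℕ} (hn : 0 < n)
    (f : Fin n → EuclideanSpace ℝ (Fin d) → ℝ)
    (g : Fin n → EuclideanSpace ℝ (Fin d) → EuclideanSpace ℝ (Fin d)) (L : ℝ)
    (hconv : ∀ i, ConvexOn ℝ Set.univ (f i))
    (hg : ∀ i y, HasGradientAt (f i) (g i y) y)
    (hL : ∀ i x y, ‖g i x - g i y‖ ≤ L * ‖x - y‖)
    (xs : EuclideanSpace ℝ (Fin d))
    (hmin : ∀ y, (n : ℝ)⁻¹ * ∑ i, f i xs ≤ (n : ℝ)⁻¹ * ∑ i, f i y)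
    (x : EuclideanSpace ℝ (Fin d)) :
    ∑ i, ‖g i x - g i xs‖ ^ 2 ≤
      2 * n * L * ((n : ℝ)⁻¹ * ∑ i, f i x - (n : ℝ)⁻¹ * ∑ i, f i xs) :=
  stmt6_general f g L hconv hg hL xs hmin x
end

section
/- Let f_i be convex and L-smooth with common minimizer relation through x* ∈ argmin f, f = (1/n)Σ f_i convex, γ > 0. Define W^k = Σ_{i=1}^n ‖φ_i^k − x* − γ f_i'(φ_i^k) + γ f_i'(x*)‖². If φ_i^{k+1} = x^k for i ∈ S^k and φ_i^{k+1} = φ_i^k otherwise, where S^k is drawn from a proper uniform sampling with p_i = τ/n, then E_k[W^{k+1}] ≤ (1 − τ/n) W^k + τ ‖x^k − x*‖² + 2 L τ γ² (f(x^k) − f(x*)). -/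
/-!
Averaging over the sampling, each `φᵢ` is replaced by `x` with probability `τ / n`, so the
expected Lyapunov term is `(1 - τ/n) Wᵏ + (τ/n) Σᵢ ‖x - x* - γ (fᵢ'(x) - fᵢ'(x*))‖²`. Expanding each
square, the cross term is nonpositive by monotonicity of `fᵢ'`, and the gradient terms are bounded
by co-coercivity of the `fᵢ'`, whose `x*`-gradients sum to zero at the minimizer `x*`.
-/

open Finset
open scoped RealInnerProductSpace

section InnerProduct

variable {E : Type*} [NormedAddCommGroup E] [InnerProductSpace ℝ E]

theorem norm_sub_smul_sq_le_of_inner_nonneg {u v : E} {γ : ℝ} (hγ : 0 ≤ γ) (h : 0 ≤ ⟪v, u⟫) :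
    ‖u - γ • v‖ ^ 2 ≤ ‖u‖ ^ 2 + γ ^ 2 * ‖v‖ ^ 2 := by
  rw [norm_sub_sq_real, real_inner_smul_right, norm_smul, mul_pow, Real.norm_eq_abs, sq_abs,
    real_inner_comm]
  nlinarith [mul_nonneg hγ h]

variable [CompleteSpace E] {F : E → ℝ} {G : E → E} {L : ℝ}

theorem HasGradientAt.hasDerivAt_comp_add_smul {g a v : E} {t : ℝ}
    (h : HasGradientAt F g (a + t • v)) :
    HasDerivAt (fun s : ℝ => F (a + s • v)) ⟪g, v⟫ t := by
  have hline : HasDerivAt (fun s : ℝ => a + s • v) v t := by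
    simpa using ((hasDerivAt_id t).smul_const v).const_add a
  simpa [Function.comp_def] using h.hasFDerivAt.comp_hasDerivAt t hline

theorem IsLocalMin.hasGradientAt_eq_zero {g a : E} (h : IsLocalMin F a)
    (hg : HasGradientAt F g a) : g = 0 := by
  simpa using h.hasFDerivAt_eq_zero hg.hasFDerivAt

theorem HasGradientAt.fun_sum {ι : Type*} {u : Finset ι} {A : ι → E → ℝ} {g : ι → E} {a : E}
    (h : ∀ i ∈ u, HasGradientAt (A i) (g i) a) :
    HasGradientAt (fun y => ∑ i ∈ u, A i y) (∑ i ∈ u, g i) a := by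
  rw [hasGradientAt_iff_hasFDerivAt, map_sum]
  exact HasFDerivAt.fun_sum fun i hi => (h i hi).hasFDerivAt

theorem ConvexOn.add_inner_gradient_le {g a : E} (hF : ConvexOn ℝ Set.univ F)
    (hg : HasGradientAt F g a) (b : E) : F a + ⟪g, b - a⟫ ≤ F b := by
  have hu : ConvexOn ℝ Set.univ fun s : ℝ => F (a + s • (b - a)) := by
    simpa [Function.comp_def, AffineMap.lineMap_apply, add_comm] using
      hF.comp_affineMap (AffineMap.lineMap a b : ℝ →ᵃ[ℝ] E)
  have hd : HasDerivAt (fun s : ℝ => F (a + s • (b - a))) ⟪g, b - a⟫ 0 :=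
    HasGradientAt.hasDerivAt_comp_add_smul (by simpa using hg)
  have hslope := hu.le_slope_of_hasDerivAt (Set.mem_univ 0) (Set.mem_univ 1) one_pos hd
  simp only [slope_def_field, one_smul, zero_smul, add_zero, add_sub_cancel, sub_zero, div_one]
    at hslope
  linarith

theorem ConvexOn.inner_sub_gradient_nonneg {a b ga gb : E} (hF : ConvexOn ℝ Set.univ F)
    (ha : HasGradientAt F ga a) (hb : HasGradientAt F gb b) : 0 ≤ ⟪ga - gb, a - b⟫ := by
  have hab := hF.add_inner_gradient_le ha b
  have hba := hF.add_inner_gradient_le hb a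
  rw [← neg_sub a b, inner_neg_right] at hab
  rw [inner_sub_left]
  linarith

theorem le_add_inner_gradient_add_sq (hg : ∀ y, HasGradientAt F (G y) y)
    (hL : ∀ x y, ‖G x - G y‖ ≤ L * ‖x - y‖) (a b : E) :
    F b ≤ F a + ⟪G a, b - a⟫ + L / 2 * ‖b - a‖ ^ 2 := by
  set v := b - a
  set φ : ℝ → ℝ := fun t => F (a + t • v) - t * ⟪G a, v⟫ - L / 2 * ‖v‖ ^ 2 * t ^ 2
  have hφ : ∀ t, HasDerivAt φ (⟪G (a + t • v), v⟫ - ⟪G a, v⟫ - L * ‖v‖ ^ 2 * t) t := by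
    intro t
    refine ((((hg (a + t • v)).hasDerivAt_comp_add_smul).sub
      ((hasDerivAt_id t).mul_const ⟪G a, v⟫)).sub
      ((hasDerivAt_pow 2 t).const_mul (L / 2 * ‖v‖ ^ 2))).congr_deriv ?_
    norm_num
    ring
  have hφ' : ∀ t ∈ interior (Set.Ici (0 : ℝ)),
      ⟪G (a + t • v), v⟫ - ⟪G a, v⟫ - L * ‖v‖ ^ 2 * t ≤ 0 := by
    intro t ht
    rw [interior_Ici, Set.mem_Ioi] at ht
    rw [sub_nonpos]
    calc ⟪G (a + t • v), v⟫ - ⟪G a, v⟫ = ⟪G (a + t • v) - G a, v⟫ := (inner_sub_left ..).symm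
      _ ≤ ‖G (a + t • v) - G a‖ * ‖v‖ := real_inner_le_norm _ _
      _ ≤ L * ‖a + t • v - a‖ * ‖v‖ := by gcongr; exact hL _ _
      _ = L * ‖v‖ ^ 2 * t := by
        rw [add_sub_cancel_left, norm_smul, Real.norm_of_nonneg ht.le]; ring
  have hanti : AntitoneOn φ (Set.Ici 0) :=
    antitoneOn_of_hasDerivWithinAt_nonpos (convex_Ici 0)
      (HasDerivAt.continuousOn fun t _ => hφ t) (fun t _ => (hφ t).hasDerivWithinAt) hφ'
  have h10 : φ 1 ≤ φ 0 := hanti Set.self_mem_Ici (Set.mem_Ici.mpr zero_le_one) zero_le_one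
  simp only [φ, v, one_smul, zero_smul, add_zero, add_sub_cancel] at h10
  linarith

theorem ConvexOn.norm_sub_gradient_sq_le (hF : ConvexOn ℝ Set.univ F)
    (hg : ∀ y, HasGradientAt F (G y) y) (hL : ∀ x y, ‖G x - G y‖ ≤ L * ‖x - y‖) (a b : E) :
    ‖G a - G b‖ ^ 2 ≤ 2 * L * (F a - F b - ⟪G b, a - b⟫) := by
  rcases eq_or_ne a b with rfl | hab
  · simp
  have hL0 : 0 ≤ L := nonneg_of_mul_nonneg_left ((norm_nonneg _).trans (hL a b))
    (norm_pos_iff.mpr (sub_ne_zero.mpr hab))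
  rcases hL0.eq_or_lt with rfl | hLpos
  · simpa using hL a b
  set z := G a - G b
  -- The step `a ↦ a - z / L` decreases `F - ⟪G b, ·⟫` by at least `‖z‖² / (2L)`, while
  -- `b` minimizes this convex function.
  set w := a - L⁻¹ • z
  have hdesc := le_add_inner_gradient_add_sq hg hL a w
  have hconv := hF.add_inner_gradient_le (hg b) w
  have hwa : w - a = -(L⁻¹ • z) := by simp [w]
  have hwb : w - b = (a - b) - L⁻¹ • z := by simp [w]; abel
  rw [hwa, inner_neg_right, real_inner_smul_right, norm_neg, norm_smul, Real.norm_of_nonneg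
    (inv_nonneg.mpr hL0)] at hdesc
  rw [hwb, inner_sub_right, real_inner_smul_right] at hconv
  have hinner : L⁻¹ * ⟪G a, z⟫ - L⁻¹ * ⟪G b, z⟫ = L⁻¹ * ‖z‖ ^ 2 := by
    rw [← mul_sub, ← inner_sub_left, real_inner_self_eq_norm_sq]
  have hsq : L / 2 * (L⁻¹ * ‖z‖) ^ 2 = L⁻¹ / 2 * ‖z‖ ^ 2 := by
    field_simp
  calc ‖z‖ ^ 2 = 2 * L * (L⁻¹ / 2 * ‖z‖ ^ 2) := by field_simp
    _ ≤ 2 * L * (F a - F b - ⟪G b, a - b⟫) := by gcongr; linarith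

theorem sum_norm_sub_gradient_sq_le {ι : Type*} [Fintype ι] {F : ι → E → ℝ} {G : ι → E → E}
    (hF : ∀ i, ConvexOn ℝ Set.univ (F i)) (hg : ∀ i y, HasGradientAt (F i) (G i y) y)
    (hL : ∀ i x y, ‖G i x - G i y‖ ≤ L * ‖x - y‖) {xs : E}
    (hmin : ∀ y, ∑ i, F i xs ≤ ∑ i, F i y) (x : E) :
    ∑ i, ‖G i x - G i xs‖ ^ 2 ≤ 2 * L * (∑ i, F i x - ∑ i, F i xs) := by
  have hzero : ∑ i, G i xs = 0 :=
    IsLocalMin.hasGradientAt_eq_zero (Filter.Eventually.of_forall hmin)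
      (HasGradientAt.fun_sum fun i _ => hg i xs)
  calc ∑ i, ‖G i x - G i xs‖ ^ 2
      ≤ ∑ i, 2 * L * (F i x - F i xs - ⟪G i xs, x - xs⟫) :=
        sum_le_sum fun i _ => (hF i).norm_sub_gradient_sq_le (hg i) (hL i) x xs
    _ = 2 * L * (∑ i, F i x - ∑ i, F i xs - ⟪∑ i, G i xs, x - xs⟫) := by
        rw [sum_inner, ← mul_sum, sum_sub_distrib, sum_sub_distrib]
    _ = 2 * L * (∑ i, F i x - ∑ i, F i xs) := by rw [hzero, inner_zero_left, sub_zero]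

theorem sum_norm_sub_smul_sub_gradient_sq_le {ι : Type*} [Fintype ι] {F : ι → E → ℝ}
    {G : ι → E → E} (hF : ∀ i, ConvexOn ℝ Set.univ (F i))
    (hg : ∀ i y, HasGradientAt (F i) (G i y) y) (hL : ∀ i x y, ‖G i x - G i y‖ ≤ L * ‖x - y‖)
    {xs : E} (hmin : ∀ y, ∑ i, F i xs ≤ ∑ i, F i y) {γ : ℝ} (hγ : 0 ≤ γ) (x : E) :
    ∑ i, ‖x - xs - γ • (G i x - G i xs)‖ ^ 2 ≤
      Fintype.card ι * ‖x - xs‖ ^ 2 + 2 * L * γ ^ 2 * (∑ i, F i x - ∑ i, F i xs) :=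
  calc ∑ i, ‖x - xs - γ • (G i x - G i xs)‖ ^ 2
      ≤ ∑ i, (‖x - xs‖ ^ 2 + γ ^ 2 * ‖G i x - G i xs‖ ^ 2) :=
        sum_le_sum fun i _ => norm_sub_smul_sq_le_of_inner_nonneg hγ
          ((hF i).inner_sub_gradient_nonneg (hg i x) (hg i xs))
    _ = Fintype.card ι * ‖x - xs‖ ^ 2 + γ ^ 2 * ∑ i, ‖G i x - G i xs‖ ^ 2 := by
        simp [sum_add_distrib, mul_sum]
    _ ≤ Fintype.card ι * ‖x - xs‖ ^ 2 + γ ^ 2 * (2 * L * (∑ i, F i x - ∑ i, F i xs)) := by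
        gcongr
        exact sum_norm_sub_gradient_sq_le hF hg hL hmin x
    _ = Fintype.card ι * ‖x - xs‖ ^ 2 + 2 * L * γ ^ 2 * (∑ i, F i x - ∑ i, F i xs) := by ring

end InnerProduct

theorem sum_mul_ite_of_sum_filter {Ω : Type*} [Fintype Ω] {P : Ω → ℝ} (hP : ∑ ω, P ω = 1)
    {A : Ω → Prop} [DecidablePred A] {p : ℝ} (hA : ∑ ω ∈ univ.filter A, P ω = p) (a b : ℝ) :
    ∑ ω, P ω * (if A ω then a else b) = p * a + (1 - p) * b := by
  have hAc : ∑ ω ∈ univ.filter (fun ω => ¬ A ω), P ω = 1 - p := by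
    rw [← hP, ← sum_filter_add_sum_filter_not univ A, hA]
    ring
  simp_rw [mul_ite, sum_ite, ← sum_mul, hA, hAc]

theorem sum_mul_sum_ite_mem {ι : Type*} [Fintype ι] [DecidableEq ι] {P : Finset ι → ℝ}
    (hP : ∑ S, P S = 1) {p : ℝ} (hp : ∀ i, ∑ S ∈ univ.filter (fun S => i ∈ S), P S = p)
    (a b : ι → ℝ) :
    ∑ S, P S * ∑ i, (if i ∈ S then a i else b i) = p * ∑ i, a i + (1 - p) * ∑ i, b i := by
  simp_rw [mul_sum]
  rw [sum_comm]
  simp_rw [sum_mul_ite_of_sum_filter hP (hp _)]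
  simp only [sum_add_distrib]

theorem stmt7 {d n : ℕ} (hn : 0 < n)
    (f : Fin n → EuclideanSpace ℝ (Fin d) → ℝ)
    (g : Fin n → EuclideanSpace ℝ (Fin d) → EuclideanSpace ℝ (Fin d)) (L : ℝ)
    (hconv : ∀ i, ConvexOn ℝ Set.univ (f i))
    (hg : ∀ i y, HasGradientAt (f i) (g i y) y)
    (hL : ∀ i x y, ‖g i x - g i y‖ ≤ L * ‖x - y‖)
    (xs : EuclideanSpace ℝ (Fin d))
    (hmin : ∀ y, (n : ℝ)⁻¹ * ∑ i, f i xs ≤ (n : ℝ)⁻¹ * ∑ i, f i y)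
    (P : Finset (Fin n) → ℝ) (hP : ∀ S, 0 ≤ P S)
    (hPsum : ∑ S : Finset (Fin n), P S = 1)
    (τ γ : ℝ) (hγ : 0 < γ)
    (hp : ∀ i, ∑ S ∈ Finset.univ.filter (fun S : Finset (Fin n) => i ∈ S), P S = τ / n)
    (x : EuclideanSpace ℝ (Fin d)) (φ : Fin n → EuclideanSpace ℝ (Fin d))
    (φnext : Finset (Fin n) → Fin n → EuclideanSpace ℝ (Fin d))
    (hφnext : ∀ S i, φnext S i = if i ∈ S then x else φ i) :
    ∑ S : Finset (Fin n),
        P S * ∑ i, ‖φnext S i - xs - γ • g i (φnext S i) + γ • g i xs‖ ^ 2 ≤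
      (1 - τ / n) * ∑ i, ‖φ i - xs - γ • g i (φ i) + γ • g i xs‖ ^ 2 +
      τ * ‖x - xs‖ ^ 2 +
      2 * L * τ * γ ^ 2 * ((n : ℝ)⁻¹ * ∑ i, f i x - (n : ℝ)⁻¹ * ∑ i, f i xs) := by
  set W : Fin n → EuclideanSpace ℝ (Fin d) → ℝ :=
    fun i y => ‖y - xs - γ • g i y + γ • g i xs‖ ^ 2
  have hWnext : ∀ S i, W i (φnext S i) = if i ∈ S then W i x else W i (φ i) := fun S i => by
    rw [hφnext]
    exact apply_ite _ _ _ _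
  have hWx : ∀ i, W i x = ‖x - xs - γ • (g i x - g i xs)‖ ^ 2 := fun i => by
    simp only [W, smul_sub]
    congr 2
    abel
  have hn' : (0 : ℝ) < n := Nat.cast_pos.mpr hn
  have hsumWx := sum_norm_sub_smul_sub_gradient_sq_le hconv hg hL
    (fun y => le_of_mul_le_mul_left (hmin y) (inv_pos.mpr hn')) hγ.le x
  simp only [← hWx, Fintype.card_fin] at hsumWx
  have hτn : 0 ≤ τ / n := hp ⟨0, hn⟩ ▸ sum_nonneg fun S _ => hP S
  change ∑ S, P S * ∑ i, W i (φnext S i) ≤ (1 - τ / n) * ∑ i, W i (φ i) + _ + _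
  simp_rw [hWnext]
  rw [sum_mul_sum_ite_mem hPsum hp]
  have hscale : τ / n * (n * ‖x - xs‖ ^ 2 + 2 * L * γ ^ 2 * (∑ i, f i x - ∑ i, f i xs)) =
      τ * ‖x - xs‖ ^ 2 +
        2 * L * τ * γ ^ 2 * ((n : ℝ)⁻¹ * ∑ i, f i x - (n : ℝ)⁻¹ * ∑ i, f i xs) := by
    field_simp
  linarith [mul_le_mul_of_nonneg_left hsumWx hτn]
end

section
/- In minibatch MISO with proper uniform sampling (p_i = τ/n), define M = max_i E[|S| | i ∈ S]. Then for any β > 0, E_k[(1/n) Σ_{i=1}^n ‖x^{k+1} − φ_i^{k+1}‖²] ≤ (6M/τ + 1) E_k[‖x^{k+1} − x^k‖²] + (γτ/(nβ)) ‖f'(x^k)‖² + (1 − τ/n + τ²/(6n²) + γτβ/n) (1/n) Σ_{i=1}^n ‖x^k − φ_i^k‖². -/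
/-!
Expand every `‖x⁺ - φᵢ⁺‖²` around the old point `x`: for a sample `S` the average splits into
`‖x⁺ - x‖²`, a cross term with `∑ᵢ (x - φᵢ)`, a cross term with `∑_{i ∈ S} (x - φᵢ)`, and the old
distances minus the refreshed ones. In expectation the first cross term only sees the mean step
`E[x⁺ - x] = -(γτ/n) f'(x)` and is split by Young's inequality with weight `γτβ/n`. The second
one is split by Young's inequality with weight `6Mn/τ` followed by
`‖∑_{i ∈ S} wᵢ‖² ≤ |S| ∑_{i ∈ S} ‖wᵢ‖²`; exchanging the sums over `S` and `i` turns the weights `P S * |S|` into `E[|S| ; i ∈ S] ≤ Mτ/n`.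
Finally, each anchor is refreshed with probability `τ/n`, which leaves the factor `1 - τ/n`.
-/

open Finset
open scoped RealInnerProductSpace

theorem sum_smul_sum_mem_eq {ι R M : Type*} [Fintype ι] [DecidableEq ι] [Semiring R]
    [AddCommMonoid M] [Module R M] (q : Finset ι → R) (u : ι → M) :
    ∑ S : Finset ι, q S • ∑ i ∈ S, u i = ∑ i, (∑ S with i ∈ S, q S) • u i := by
  calc ∑ S : Finset ι, q S • ∑ i ∈ S, u i
      = ∑ S : Finset ι, ∑ i, if i ∈ S then q S • u i else 0 := by
        simp only [Finset.smul_sum, Finset.sum_ite_mem, Finset.univ_inter]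
    _ = ∑ i, (∑ S with i ∈ S, q S) • u i := by
        rw [Finset.sum_comm]
        simp only [Finset.sum_smul, Finset.sum_filter, ite_smul, zero_smul]

theorem le_sum_filter_mem_mul_card {ι : Type*} [Fintype ι] [DecidableEq ι] {P : Finset ι → ℝ}
    (hP : ∀ S, 0 ≤ P S) (i : ι) :
    ∑ S with i ∈ S, P S ≤ ∑ S with i ∈ S, P S * #S := by
  refine Finset.sum_le_sum fun S hS => le_mul_of_one_le_right (hP S) ?_
  exact_mod_cast Finset.card_pos.2 ⟨i, (Finset.mem_filter.1 hS).2⟩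

theorem sum_ite_mem_sub_sum {ι E E' : Type*} [Fintype ι] [DecidableEq ι] [AddCommGroup E']
    (F : ι → E → E') (S : Finset ι) (x : E) (φ : ι → E) :
    ∑ i, F i (if i ∈ S then x else φ i) - ∑ i, F i (φ i) = ∑ i ∈ S, (F i x - F i (φ i)) := by
  rw [← Finset.sum_sub_distrib, ← Finset.sum_ite_mem_eq S]
  refine Finset.sum_congr rfl fun i _ => ?_
  split_ifs
  · rfl
  · exact sub_self _

theorem norm_sum_sq_le_card_mul_sum_norm_sq {ι E : Type*} [SeminormedAddCommGroup E]
    (s : Finset ι) (w : ι → E) :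
    ‖∑ i ∈ s, w i‖ ^ 2 ≤ #s * ∑ i ∈ s, ‖w i‖ ^ 2 :=
  (pow_le_pow_left₀ (norm_nonneg _) (norm_sum_le _ _) 2).trans sq_sum_le_card_mul_sum_sq

theorem HasGradientAt.const_mul_sum {ι F : Type*} [Fintype ι] [NormedAddCommGroup F]
    [InnerProductSpace ℝ F] [CompleteSpace F] {f : ι → F → ℝ} {g : ι → F} {y : F} (c : ℝ)
    (h : ∀ i, HasGradientAt (f i) (g i) y) :
    HasGradientAt (fun z => c * ∑ i, f i z) (c • ∑ i, g i) y := by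
  rw [hasGradientAt_iff_hasFDerivAt, map_smul, map_sum]
  exact (HasFDerivAt.fun_sum fun i _ => (h i).hasFDerivAt).const_mul c

section InnerProduct

variable {ι E : Type*} [Fintype ι] [NormedAddCommGroup E] [InnerProductSpace ℝ E]

theorem two_mul_inner_le_inv_mul_add_mul {c : ℝ} (hc : 0 < c) (u w : E) :
    2 * ⟪u, w⟫ ≤ c⁻¹ * ‖u‖ ^ 2 + c * ‖w‖ ^ 2 := by
  have key : c⁻¹ * ‖u - c • w‖ ^ 2 = c⁻¹ * ‖u‖ ^ 2 + c * ‖w‖ ^ 2 - 2 * ⟪u, w⟫ := by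
    rw [norm_sub_sq_real, real_inner_smul_right, norm_smul, Real.norm_of_nonneg hc.le]
    field_simp
    ring
  linarith [mul_nonneg (inv_nonneg.2 hc.le) (sq_nonneg ‖u - c • w‖)]

theorem two_mul_inner_sum_le {c : ℝ} (hc : 0 < c) (m : E) (w : ι → E) :
    2 * ⟪m, ∑ i, w i⟫ ≤ Fintype.card ι * c⁻¹ * ‖m‖ ^ 2 + c * ∑ i, ‖w i‖ ^ 2 := by
  calc 2 * ⟪m, ∑ i, w i⟫ = ∑ i, 2 * ⟪m, w i⟫ := by rw [inner_sum, Finset.mul_sum]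
    _ ≤ ∑ i, (c⁻¹ * ‖m‖ ^ 2 + c * ‖w i‖ ^ 2) :=
        Finset.sum_le_sum fun i _ => two_mul_inner_le_inv_mul_add_mul hc m (w i)
    _ = Fintype.card ι * c⁻¹ * ‖m‖ ^ 2 + c * ∑ i, ‖w i‖ ^ 2 := by
        rw [Finset.sum_add_distrib, Finset.sum_const, Finset.card_univ, nsmul_eq_mul,
          Finset.mul_sum, mul_assoc]

variable [DecidableEq ι] {P : Finset ι → ℝ}

theorem sum_norm_sub_ite_sq (S : Finset ι) (x y : E) (φ : ι → E) :
    ∑ i, ‖y - if i ∈ S then x else φ i‖ ^ 2 =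
      Fintype.card ι * ‖y - x‖ ^ 2 + 2 * ⟪y - x, ∑ i, (x - φ i)⟫
        - 2 * ⟪y - x, ∑ i ∈ S, (x - φ i)⟫ + (∑ i, ‖x - φ i‖ ^ 2 - ∑ i ∈ S, ‖x - φ i‖ ^ 2) := by
  have expand : ∀ i, ‖y - if i ∈ S then x else φ i‖ ^ 2 =
      ‖y - x‖ ^ 2 + 2 * ⟪y - x, x - φ i⟫ + ‖x - φ i‖ ^ 2
        - if i ∈ S then 2 * ⟪y - x, x - φ i⟫ + ‖x - φ i‖ ^ 2 else 0 := by
    intro i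
    split_ifs
    · ring
    · rw [← norm_add_sq_real, sub_add_sub_cancel, sub_zero]
  simp only [expand, Finset.sum_sub_distrib, Finset.sum_add_distrib, Finset.sum_ite_mem,
    Finset.univ_inter, Finset.sum_const, Finset.card_univ, nsmul_eq_mul, ← Finset.mul_sum,
    ← inner_sum]
  ring

theorem sum_mul_sum_norm_sub_ite_sq {p : ℝ} (hPsum : ∑ S, P S = 1)
    (hp : ∀ i, ∑ S with i ∈ S, P S = p) (x : E) (φ : ι → E) (y : Finset ι → E) :
    ∑ S, P S * ∑ i, ‖y S - if i ∈ S then x else φ i‖ ^ 2 =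
      Fintype.card ι * ∑ S, P S * ‖y S - x‖ ^ 2 + 2 * ⟪∑ S, P S • (y S - x), ∑ i, (x - φ i)⟫
        - 2 * ∑ S, P S * ⟪y S - x, ∑ i ∈ S, (x - φ i)⟫ + (1 - p) * ∑ i, ‖x - φ i‖ ^ 2 := by
  have hB : ∑ S, P S * ∑ i ∈ S, ‖x - φ i‖ ^ 2 = p * ∑ i, ‖x - φ i‖ ^ 2 := by
    simpa only [smul_eq_mul, hp, ← Finset.mul_sum] using
      sum_smul_sum_mem_eq P (fun i => ‖x - φ i‖ ^ 2)
  have expand : ∀ S, P S * ∑ i, ‖y S - if i ∈ S then x else φ i‖ ^ 2 =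
      Fintype.card ι * (P S * ‖y S - x‖ ^ 2) + 2 * (P S * ⟪y S - x, ∑ i, (x - φ i)⟫)
        - 2 * (P S * ⟪y S - x, ∑ i ∈ S, (x - φ i)⟫)
        + (P S * ∑ i, ‖x - φ i‖ ^ 2 - P S * ∑ i ∈ S, ‖x - φ i‖ ^ 2) := by
    intro S
    rw [sum_norm_sub_ite_sq]
    ring
  rw [Finset.sum_congr rfl fun S _ => expand S, Finset.sum_add_distrib, Finset.sum_sub_distrib,
    Finset.sum_add_distrib, ← Finset.mul_sum, ← Finset.mul_sum, ← Finset.mul_sum,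
    Finset.sum_sub_distrib (f := fun S => P S * ∑ i, ‖x - φ i‖ ^ 2), ← Finset.sum_mul, hPsum, hB]
  simp only [sum_inner, real_inner_smul_left]
  ring

theorem neg_two_mul_sum_mul_inner_sum_mem_le (hP : ∀ S, 0 ≤ P S) {c K : ℝ} (hc : 0 < c)
    (hK : ∀ i, ∑ S with i ∈ S, P S * #S ≤ K) (a : Finset ι → E) (w : ι → E) :
    -(2 * ∑ S, P S * ⟪a S, ∑ i ∈ S, w i⟫) ≤
      c * ∑ S, P S * ‖a S‖ ^ 2 + c⁻¹ * K * ∑ i, ‖w i‖ ^ 2 := by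
  have young : ∀ S : Finset ι, -(2 * ⟪a S, ∑ i ∈ S, w i⟫) ≤
      c * ‖a S‖ ^ 2 + c⁻¹ * (#S * ∑ i ∈ S, ‖w i‖ ^ 2) := by
    intro S
    have h := two_mul_inner_le_inv_mul_add_mul (inv_pos.2 hc) (a S) (-∑ i ∈ S, w i)
    rw [inv_inv, inner_neg_right, norm_neg] at h
    have := mul_le_mul_of_nonneg_left (norm_sum_sq_le_card_mul_sum_norm_sq S w)
      (inv_nonneg.2 hc.le)
    linarith
  have swap : ∑ S, P S * (#S * ∑ i ∈ S, ‖w i‖ ^ 2) ≤ K * ∑ i, ‖w i‖ ^ 2 := by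
    calc ∑ S, P S * (#S * ∑ i ∈ S, ‖w i‖ ^ 2)
        = ∑ i, (∑ S with i ∈ S, P S * #S) * ‖w i‖ ^ 2 := by
          simpa only [smul_eq_mul, mul_assoc] using
            sum_smul_sum_mem_eq (fun S => P S * #S) (fun i => ‖w i‖ ^ 2)
      _ ≤ ∑ i, K * ‖w i‖ ^ 2 :=
          Finset.sum_le_sum fun i _ => mul_le_mul_of_nonneg_right (hK i) (sq_nonneg _)
      _ = K * ∑ i, ‖w i‖ ^ 2 := by rw [Finset.mul_sum]
  calc -(2 * ∑ S, P S * ⟪a S, ∑ i ∈ S, w i⟫) = ∑ S, P S * -(2 * ⟪a S, ∑ i ∈ S, w i⟫) := by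
        rw [Finset.mul_sum, ← Finset.sum_neg_distrib]
        exact Finset.sum_congr rfl fun S _ => by ring
    _ ≤ ∑ S, P S * (c * ‖a S‖ ^ 2 + c⁻¹ * (#S * ∑ i ∈ S, ‖w i‖ ^ 2)) :=
        Finset.sum_le_sum fun S _ => mul_le_mul_of_nonneg_left (young S) (hP S)
    _ = c * ∑ S, P S * ‖a S‖ ^ 2 + c⁻¹ * ∑ S, P S * (#S * ∑ i ∈ S, ‖w i‖ ^ 2) := by
        rw [Finset.mul_sum, Finset.mul_sum, ← Finset.sum_add_distrib]
        exact Finset.sum_congr rfl fun S _ => by ring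
    _ ≤ c * ∑ S, P S * ‖a S‖ ^ 2 + c⁻¹ * K * ∑ i, ‖w i‖ ^ 2 := by
        rw [mul_assoc c⁻¹]
        gcongr

theorem sum_mul_sum_norm_sub_ite_sq_le (hP : ∀ S, 0 ≤ P S) (hPsum : ∑ S, P S = 1) {p K : ℝ}
    (hp : ∀ i, ∑ S with i ∈ S, P S = p) (hK : ∀ i, ∑ S with i ∈ S, P S * #S ≤ K)
    {c₁ c₂ : ℝ} (hc₁ : 0 < c₁) (hc₂ : 0 < c₂) (x : E) (φ : ι → E) (y : Finset ι → E) :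
    ∑ S, P S * ∑ i, ‖y S - if i ∈ S then x else φ i‖ ^ 2 ≤
      (Fintype.card ι + c₂) * ∑ S, P S * ‖y S - x‖ ^ 2
        + Fintype.card ι * c₁⁻¹ * ‖∑ S, P S • (y S - x)‖ ^ 2
        + (c₁ + c₂⁻¹ * K + 1 - p) * ∑ i, ‖x - φ i‖ ^ 2 := by
  rw [sum_mul_sum_norm_sub_ite_sq hPsum hp]
  linarith [two_mul_inner_sum_le hc₁ (∑ S, P S • (y S - x)) (fun i => x - φ i),
    neg_two_mul_sum_mul_inner_sum_mem_le hP hc₂ hK (fun S => y S - x) (fun i => x - φ i)]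

end InnerProduct

section Miso

variable {ι E : Type*} [Fintype ι] [NormedAddCommGroup E] [InnerProductSpace ℝ E]

noncomputable def misoIterate (γ : ℝ) (g : ι → E → E) (φ : ι → E) : E :=
  (Fintype.card ι : ℝ)⁻¹ • ∑ i, φ i - (γ / Fintype.card ι) • ∑ i, g i (φ i)

variable [DecidableEq ι]

theorem misoIterate_ite_sub (γ : ℝ) (g : ι → E → E) (S : Finset ι) (x : E) (φ : ι → E) :
    misoIterate γ g (fun i => if i ∈ S then x else φ i) - misoIterate γ g φ =
      ∑ i ∈ S, ((Fintype.card ι : ℝ)⁻¹ • (x - φ i)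
        - (γ / Fintype.card ι) • (g i x - g i (φ i))) := by
  have hφ := sum_ite_mem_sub_sum (fun _ => id) S x φ
  have hg := sum_ite_mem_sub_sum g S x φ
  simp only [id] at hφ
  rw [Finset.sum_sub_distrib, ← Finset.smul_sum, ← Finset.smul_sum, ← hφ, ← hg, misoIterate,
    misoIterate, smul_sub, smul_sub]
  abel

theorem sum_smul_misoIterate_ite_sub [Nonempty ι] {P : Finset ι → ℝ} {p γ : ℝ}
    (hp : ∀ i, ∑ S with i ∈ S, P S = p) {g : ι → E → E} {x : E} {φ : ι → E}
    (hx : x = misoIterate γ g φ) :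
    ∑ S, P S • (misoIterate γ g (fun i => if i ∈ S then x else φ i) - x) =
      -(p * γ / Fintype.card ι) • ∑ i, g i x := by
  have hn : (Fintype.card ι : ℝ) ≠ 0 := Nat.cast_ne_zero.2 Fintype.card_ne_zero
  set v : ι → E := fun i => (Fintype.card ι : ℝ)⁻¹ • (x - φ i)
    - (γ / Fintype.card ι) • (g i x - g i (φ i))
  have hstep : ∀ S : Finset ι, misoIterate γ g (fun i => if i ∈ S then x else φ i) - x =
      ∑ i ∈ S, v i := fun S => by
    have := misoIterate_ite_sub γ g S x φ
    rwa [← hx] at this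
  have hv : ∑ i, v i = -(γ / Fintype.card ι) • ∑ i, g i x := by
    simp only [v, Finset.sum_sub_distrib, ← Finset.smul_sum, Finset.sum_const, Finset.card_univ,
      smul_sub, ← Nat.cast_smul_eq_nsmul ℝ, smul_smul, inv_mul_cancel₀ hn, one_smul]
    nth_rewrite 1 [hx]
    rw [misoIterate]
    module
  rw [Finset.sum_congr rfl fun S _ => by rw [hstep S], sum_smul_sum_mem_eq]
  simp only [hp, ← Finset.smul_sum, hv, smul_smul]
  congr 1
  ring

end Miso

theorem stmt13 {d n : ℕ} (hn : 0 < n)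
    (f : Fin n → EuclideanSpace ℝ (Fin d) → ℝ)
    (g : Fin n → EuclideanSpace ℝ (Fin d) → EuclideanSpace ℝ (Fin d))
    (hg : ∀ i y, HasGradientAt (f i) (g i y) y)
    (G : EuclideanSpace ℝ (Fin d) → EuclideanSpace ℝ (Fin d))
    (hG : ∀ y, HasGradientAt (fun z => (n : ℝ)⁻¹ * ∑ i, f i z) (G y) y)
    (P : Finset (Fin n) → ℝ) (hP : ∀ S, 0 ≤ P S)
    (hPsum : ∑ S : Finset (Fin n), P S = 1)
    (τ γ β : ℝ) (hτ : 0 < τ) (hγ : 0 < γ) (hβ : 0 < β)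
    (hp : ∀ i, ∑ S ∈ Finset.univ.filter (fun S : Finset (Fin n) => i ∈ S), P S = τ / n)
    (M : ℝ)
    (hM : M = Finset.univ.sup' ⟨⟨0, hn⟩, Finset.mem_univ _⟩ fun i =>
      (∑ S ∈ Finset.univ.filter (fun S : Finset (Fin n) => i ∈ S),
        P S * (S.card : ℝ)) / (τ / n))
    (x : EuclideanSpace ℝ (Fin d)) (φ : Fin n → EuclideanSpace ℝ (Fin d))
    (hx : x = (n : ℝ)⁻¹ • ∑ i, φ i - (γ / n) • ∑ i, g i (φ i))
    (φnext : Finset (Fin n) → Fin n → EuclideanSpace ℝ (Fin d))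
    (hφnext : ∀ S i, φnext S i = if i ∈ S then x else φ i)
    (xnext : Finset (Fin n) → EuclideanSpace ℝ (Fin d))
    (hxnext : ∀ S, xnext S =
      (n : ℝ)⁻¹ • ∑ i, φnext S i - (γ / n) • ∑ i, g i (φnext S i)) :
    ∑ S : Finset (Fin n), P S * ((n : ℝ)⁻¹ * ∑ i, ‖xnext S - φnext S i‖ ^ 2) ≤
      (6 * M / τ + 1) * ∑ S : Finset (Fin n), P S * ‖xnext S - x‖ ^ 2 +
      γ * τ / (n * β) * ‖G x‖ ^ 2 +
      (1 - τ / n + τ ^ 2 / (6 * (n : ℝ) ^ 2) + γ * τ * β / n) *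
        ((n : ℝ)⁻¹ * ∑ i, ‖x - φ i‖ ^ 2) := by
  have hn' : (0 : ℝ) < n := by exact_mod_cast hn
  have hτn : 0 < τ / n := div_pos hτ hn'
  have hM_ge : ∀ i, (∑ S with i ∈ S, P S * #S) / (τ / n) ≤ M := fun i =>
    hM ▸ le_sup' (fun i => (∑ S with i ∈ S, P S * #S) / (τ / n)) (mem_univ i)
  have hM_pos : 0 < M := by
    have h := (hp ⟨0, hn⟩).symm.trans_le (le_sum_filter_mem_mul_card hP ⟨0, hn⟩)
    exact (div_pos (hτn.trans_le h) hτn).trans_le (hM_ge ⟨0, hn⟩)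
  have hK : ∀ i, ∑ S with i ∈ S, P S * #S ≤ M * (τ / n) := fun i => (div_le_iff₀ hτn).1 (hM_ge i)
  obtain rfl : φnext = fun S i => if i ∈ S then x else φ i := funext₂ hφnext
  have hx' : x = misoIterate γ g φ := by simpa [misoIterate] using hx
  have : Nonempty (Fin n) := ⟨⟨0, hn⟩⟩
  have hmean : ∑ S, P S • (xnext S - x) = -(γ * τ / n) • G x := by
    obtain rfl : xnext = fun S => misoIterate γ g (fun i => if i ∈ S then x else φ i) :=
      funext fun S => by simpa [misoIterate] using hxnext S
    rw [sum_smul_misoIterate_ite_sub hp hx',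
      (hG x).unique (HasGradientAt.const_mul_sum _ fun i => hg i x), smul_smul,
      Fintype.card_fin]
    congr 1
    field_simp
  have key := sum_mul_sum_norm_sub_ite_sq_le hP hPsum hp hK
    (c₁ := γ * τ * β / n) (c₂ := 6 * M * n / τ) (by positivity) (by positivity) x φ xnext
  rw [hmean, norm_smul, norm_neg, Real.norm_of_nonneg (by positivity), Fintype.card_fin] at key
  calc _ = (n : ℝ)⁻¹ * ∑ S, P S * ∑ i, ‖xnext S - if i ∈ S then x else φ i‖ ^ 2 := by
        rw [Finset.mul_sum]
        exact Finset.sum_congr rfl fun S _ => by ring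
    _ ≤ _ := mul_le_mul_of_nonneg_left key (by positivity)
    _ = _ := by
        field_simp
        ring
end
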